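/- arXiv:1405.7328 — 6 statements merged into one kernel-verified Lean document; each statement's English description precedes it below -/
import Mathlib

section
/- Let (A, B) be a periodic Golay pair of length v = 2d with entries in {-1,1}, and define the 2-compressed sequences A' and B' of length d by a'_i = a_i + a_{i+d} and b'_i = b_i + b_{i+d}. Then each entry of A' and B' lies in {-2, 0, 2}, and PAF_{A'}(k) + PAF_{B'}(k) = 0 for all k = 1,...,d-1, where PAF is computed modulo d. -/
/-!
Since `2d = 0` in `ℤ/2dℤ`, expanding `a'ᵢ a'ᵢ₊ₖ = (aᵢ + aᵢ₊d)(aᵢ₊ₖ + aᵢ₊ₖ₊d)` and summing over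
`i < d` gives `PAF_{A'}(k) = PAF_A(k) + PAF_A(k + d)`, and likewise for `B`. For `0 < k < d` both
`k` and `k + d` are nonzero modulo `2d`, so the Golay property makes both sums vanish. The entries
of `A'` are sums of two signs.
-/

/-- The 2-compression of a sequence of length 2d. -/
def compress (d : ℕ) (a : ZMod (2 * d) → ℤ) (i : ℕ) : ℤ :=
  a i + a (i + d)

/-- Summed over `Finset.range n` through the cast `ℕ → ZMod n`, as in the Golay hypothesis, so no
`NeZero n` is needed. -/
def paf (n : ℕ) (a : ZMod n → ℤ) (k : ZMod n) : ℤ :=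
  ∑ i ∈ Finset.range n, a i * a (i + k)

theorem ZMod.natCast_add_self_two_mul (d : ℕ) : (d : ZMod (2 * d)) + d = 0 := by
  rw [← two_mul]
  exact_mod_cast ZMod.natCast_self (2 * d)

namespace compress

variable {d : ℕ} (a : ZMod (2 * d) → ℤ)

theorem mem_of_sign (ha : ∀ i, a i = 1 ∨ a i = -1) (i : ℕ) :
    compress d a i ∈ ({-2, 0, 2} : Set ℤ) := by
  rcases ha i with h | h <;> rcases ha (i + d) with h' | h' <;> simp [compress, h, h']

theorem periodic : Function.Periodic (compress d a) d := by
  intro i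
  simp only [compress, Nat.cast_add, add_assoc, ZMod.natCast_add_self_two_mul, add_zero]
  exact add_comm _ _

theorem sum_mul_shift (k : ℕ) :
    ∑ i ∈ Finset.range d, compress d a i * compress d a (i + k) =
      paf (2 * d) a k + paf (2 * d) a (k + d) := by
  have hdd := ZMod.natCast_add_self_two_mul d
  simp only [paf, two_mul, Finset.sum_range_add, ← Finset.sum_add_distrib]
  refine Finset.sum_congr rfl fun i _ => ?_
  simp only [compress, Nat.cast_add]
  rw [add_comm (d : ZMod (2 * d)), ← add_assoc _ (k : ZMod (2 * d)),
    show (i : ZMod (2 * d)) + d + (k + d) = i + k by linear_combination hdd,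
    add_right_comm (i : ZMod (2 * d)) d]
  ring

end compress

theorem ZMod.natCast_ne_zero_of_pos_of_lt {m n : ℕ} (hm : 0 < m) (hmn : m < n) :
    (m : ZMod n) ≠ 0 :=
  (ZMod.natCast_eq_zero_iff m n).not.mpr (Nat.not_dvd_of_pos_of_lt hm hmn)

theorem compressed_periodic_golay_general (d : ℕ) (a b : ZMod (2 * d) → ℤ)
    (ha : ∀ i, a i = 1 ∨ a i = -1) (hb : ∀ i, b i = 1 ∨ b i = -1)
    (hG : ∀ k : ZMod (2 * d), k ≠ 0 →
      ∑ i ∈ Finset.range (2 * d), (a i * a (i + k) + b i * b (i + k)) = 0) :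
    (∀ i : ℕ, compress d a i ∈ ({-2, 0, 2} : Set ℤ) ∧ compress d b i ∈ ({-2, 0, 2} : Set ℤ)) ∧
    (∀ k : ℕ, 1 ≤ k → k ≤ d - 1 →
      ∑ i ∈ Finset.range d,
        (compress d a i * compress d a ((i + k) % d) +
         compress d b i * compress d b ((i + k) % d)) = 0) := by
  refine ⟨fun i => ⟨compress.mem_of_sign a ha i, compress.mem_of_sign b hb i⟩, fun k hk1 hk2 => ?_⟩
  have hpaf (m : ℕ) (hm : 0 < m) (hmd : m < 2 * d) : paf (2 * d) a m + paf (2 * d) b m = 0 := by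
    rw [paf, paf, ← Finset.sum_add_distrib]
    exact hG m (ZMod.natCast_ne_zero_of_pos_of_lt hm hmd)
  have hk := hpaf k (by omega) (by omega)
  have hkd := hpaf (k + d) (by omega) (by omega)
  push_cast at hkd
  simp only [(compress.periodic a).map_mod_nat, (compress.periodic b).map_mod_nat,
    Finset.sum_add_distrib, compress.sum_mul_shift]
  linear_combination hk + hkd

/-- The 2-compressed sequences of a periodic Golay pair of length 2d have entries in
{-2, 0, 2} and complementary periodic autocorrelations. -/
theorem compressed_periodic_golay (d : ℕ) (hd : 0 < d) (a b : ZMod (2 * d) → ℤ)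
    (ha : ∀ i, a i = 1 ∨ a i = -1) (hb : ∀ i, b i = 1 ∨ b i = -1)
    (hG : ∀ k : ZMod (2 * d), k ≠ 0 →
      ∑ i ∈ Finset.range (2 * d), (a i * a (i + k) + b i * b (i + k)) = 0) :
    (∀ i : ℕ, compress d a i ∈ ({-2, 0, 2} : Set ℤ) ∧ compress d b i ∈ ({-2, 0, 2} : Set ℤ)) ∧
    (∀ k : ℕ, 1 ≤ k → k ≤ d - 1 →
      ∑ i ∈ Finset.range d,
        (compress d a i * compress d a ((i + k) % d) +
         compress d b i * compress d b ((i + k) % d)) = 0) :=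
  compressed_periodic_golay_general d a b ha hb hG
end

section
/- Let (A, B) be a periodic Golay pair of length v = 2d with entries in {-1,1} and let A', B' be the 2-compressed sequences a'_i = a_i + a_{i+d}, b'_i = b_i + b_{i+d} (sequences of length d). Then the total number of indices i ∈ {0,...,d-1} with a'_i = 0 plus the number of indices with b'_i = 0 equals d. -/
open Finset

lemma Int.mul_eq_ite_add_eq_zero {x y : ℤ} (hx : x = 1 ∨ x = -1) (hy : y = 1 ∨ y = -1) :
    x * y = if x + y = 0 then -1 else 1 := by
  rcases hx with rfl | rfl <;> rcases hy with rfl | rfl <;> norm_num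

lemma Finset.sum_mul_eq_card_sub_two_mul_card_filter_add_eq_zero {ι : Type*} (s : Finset ι)
    {x y : ι → ℤ} (hx : ∀ i ∈ s, x i = 1 ∨ x i = -1) (hy : ∀ i ∈ s, y i = 1 ∨ y i = -1) :
    ∑ i ∈ s, x i * y i = #s - 2 * #{i ∈ s | x i + y i = 0} := by
  have hcard := card_filter_add_card_filter_not (s := s) (fun i => x i + y i = 0)
  rw [sum_congr rfl fun i hi => Int.mul_eq_ite_add_eq_zero (hx i hi) (hy i hi), sum_ite,
    sum_const, sum_const]
  simp only [nsmul_eq_mul, mul_neg_one, mul_one]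
  omega

lemma Function.Periodic.sum_range_two_mul {M : Type*} [AddCommMonoid M] {f : ℕ → M} {d : ℕ}
    (hf : Function.Periodic f d) : ∑ i ∈ range (2 * d), f i = 2 • ∑ i ∈ range d, f i := by
  rw [two_mul, sum_range_add, two_nsmul]
  congr 1
  exact sum_congr rfl fun i _ => by rw [add_comm, hf i]

lemma ZMod.add_half_add_half (d : ℕ) (x : ZMod (2 * d)) : x + d + d = x := by
  have h : ((2 * d : ℕ) : ZMod (2 * d)) = 0 := ZMod.natCast_self _
  push_cast at h
  linear_combination h

lemma ZMod.natCast_half_ne_zero {d : ℕ} (hd : 0 < d) : (d : ZMod (2 * d)) ≠ 0 := by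
  rw [Ne, ZMod.natCast_eq_zero_iff]
  exact fun h => by have := Nat.le_of_dvd hd h; omega

lemma sum_range_mul_shift_half {d : ℕ} {a : ZMod (2 * d) → ℤ} (ha : ∀ i, a i = 1 ∨ a i = -1) :
    ∑ i ∈ range (2 * d), a i * a (i + d) = 2 * (d - 2 * #{i ∈ range d | compress d a i = 0}) := by
  have hperiodic : Function.Periodic (fun i : ℕ => a i * a (i + d)) d := fun i => by
    simp only [Nat.cast_add, ZMod.add_half_add_half, mul_comm]
  rw [hperiodic.sum_range_two_mul, nsmul_eq_mul,
    sum_mul_eq_card_sub_two_mul_card_filter_add_eq_zero _ (fun i _ => ha _) (fun i _ => ha _),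
    card_range]
  rfl

theorem compressed_zero_count_general (d : ℕ) (a b : ZMod (2 * d) → ℤ)
    (ha : ∀ i, a i = 1 ∨ a i = -1) (hb : ∀ i, b i = 1 ∨ b i = -1)
    (hG : ∀ k : ZMod (2 * d), k ≠ 0 →
      ∑ i ∈ Finset.range (2 * d), (a i * a (i + k) + b i * b (i + k)) = 0) :
    ((Finset.range d).filter (fun i => compress d a i = 0)).card +
    ((Finset.range d).filter (fun i => compress d b i = 0)).card = d := by
  rcases Nat.eq_zero_or_pos d with rfl | hd
  · simp
  have hshift := hG d (ZMod.natCast_half_ne_zero hd)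
  rw [sum_add_distrib, sum_range_mul_shift_half ha, sum_range_mul_shift_half hb] at hshift
  omega

/-- The total number of zero entries in the two 2-compressed sequences of a periodic
Golay pair of length 2d equals d. -/
theorem compressed_zero_count (d : ℕ) (hd : 0 < d) (a b : ZMod (2 * d) → ℤ)
    (ha : ∀ i, a i = 1 ∨ a i = -1) (hb : ∀ i, b i = 1 ∨ b i = -1)
    (hG : ∀ k : ZMod (2 * d), k ≠ 0 →
      ∑ i ∈ Finset.range (2 * d), (a i * a (i + k) + b i * b (i + k)) = 0) :
    ((Finset.range d).filter (fun i => compress d a i = 0)).card +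
    ((Finset.range d).filter (fun i => compress d b i = 0)).card = d :=
  compressed_zero_count_general d a b ha hb hG
end

section
/- Let (X, Y) be a supplementary difference set with parameters (v; r, s; λ) over ℤ_v satisfying v = 2(r + s − λ). Define A, B : ℤ_v → ℤ by a_j = -1 if j ∈ X, a_j = 1 otherwise, and similarly b_j from Y. Then (A, B) is a periodic Golay pair of length v. -/
/-!
Write `χ_S(i) = [i ∈ S]`. The ±1 sequence of `S` is `1 - 2χ_S`, so its periodic autocorrelation at
shift `k` expands to `v - 4|S| + 4 N_S(k)`, where `N_S(k)` counts the pairs of `S × S` with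
difference `k`. Summing over `X` and `Y` at a nonzero shift gives `2v - 4(r + s - λ)`, which
vanishes exactly when `v = 2(r + s - λ)`.
-/

open Finset

theorem ite_neg_one_mul_ite_neg_one (p q : Prop) [Decidable p] [Decidable q] :
    (if p then (-1 : ℤ) else 1) * (if q then -1 else 1) =
      1 - 2 * (if p then 1 else 0) - 2 * (if q then 1 else 0) + 4 * (if p ∧ q then 1 else 0) := by
  by_cases hp : p <;> by_cases hq : q <;> simp [hp, hq]

section
variable {G : Type*} [AddCommGroup G] [Fintype G] [DecidableEq G]

theorem card_filter_mem_add_mem (S : Finset G) (k : G) :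
    #{i | i ∈ S ∧ i + k ∈ S} = #((S ×ˢ S).filter (fun p => p.1 - p.2 = k)) := by
  refine card_nbij' (fun i => (i + k, i)) Prod.snd ?_ ?_ ?_ ?_
  · intro i; simp +contextual
  · rintro ⟨x, y⟩ h
    simp only [coe_filter, mem_product, Set.mem_ofPred_eq, sub_eq_iff_eq_add'] at h
    obtain ⟨⟨hx, hy⟩, rfl⟩ := h
    simpa using ⟨hy, hx⟩
  · intro i _; rfl
  · rintro ⟨x, y⟩; simp +contextual [sub_eq_iff_eq_add']

theorem sum_ite_neg_one_mul_ite_add_neg_one (S : Finset G) (k : G) :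
    ∑ i, (if i ∈ S then (-1 : ℤ) else 1) * (if i + k ∈ S then -1 else 1) =
      Fintype.card G - 4 * #S + 4 * #((S ×ˢ S).filter (fun p => p.1 - p.2 = k)) := by
  have hshift : ∑ i, (if i + k ∈ S then (1 : ℤ) else 0) = ∑ i, if i ∈ S then 1 else 0 :=
    Equiv.sum_comp (Equiv.addRight k) fun i => if i ∈ S then (1 : ℤ) else 0
  simp only [ite_neg_one_mul_ite_neg_one, sum_add_distrib, sum_sub_distrib, ← mul_sum, hshift]
  simp only [sum_boole, sum_const, card_univ, nsmul_eq_mul, mul_one, filter_univ_mem,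
    card_filter_mem_add_mem]
  ring

end

/-- A supplementary difference set with parameters (v; r, s; λ) satisfying
v = 2(r + s − λ) yields a periodic Golay pair of length v. -/
theorem sds_to_periodic_golay (v : ℕ) [NeZero v] (X Y : Finset (ZMod v))
    (r s lam : ℕ) (hX : X.card = r) (hY : Y.card = s)
    (hSDS : ∀ c : ZMod v, c ≠ 0 →
      ((X ×ˢ X).filter (fun p => p.1 - p.2 = c)).card +
      ((Y ×ˢ Y).filter (fun p => p.1 - p.2 = c)).card = lam)
    (hv : (v : ℤ) = 2 * ((r : ℤ) + s - lam)) :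
    ∀ k : ZMod v, k ≠ 0 →
      ∑ i : ZMod v,
        ((if i ∈ X then (-1 : ℤ) else 1) * (if i + k ∈ X then (-1 : ℤ) else 1) +
         (if i ∈ Y then (-1 : ℤ) else 1) * (if i + k ∈ Y then (-1 : ℤ) else 1)) = 0 := by
  intro k hk
  have hlam : (#((X ×ˢ X).filter (fun p => p.1 - p.2 = k)) : ℤ) +
      #((Y ×ˢ Y).filter (fun p => p.1 - p.2 = k)) = lam := mod_cast hSDS k hk
  rw [sum_add_distrib, sum_ite_neg_one_mul_ite_add_neg_one, sum_ite_neg_one_mul_ite_add_neg_one,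
    ZMod.card, hX, hY]
  linarith
end

section
/- If (A, B) is a periodic Golay pair of length v and k is an integer coprime to v, then (A', B') is also a periodic Golay pair, where a'_i = a_{ki mod v} and b'_i = b_{ki mod v}. -/
/-! Since `k` is a unit of `ZMod v`, reindexing by `i ↦ k * i` permutes `ZMod v`, so the periodic
autocorrelation of the decimated pair at a shift `s ≠ 0` is that of the original pair at the
shift `k * s ≠ 0`, which vanishes. -/

theorem Fintype.sum_mul_units_shift {R M : Type*} [Ring R] [Fintype R] [AddCommMonoid M]
    (u : Rˣ) (f : R → R → M) (s : R) :
    ∑ i, f (u * i) (u * (i + s)) = ∑ i, f i (i + u * s) :=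
  Fintype.sum_bijective _ u.mulLeft_bijective _ _ fun i => by rw [mul_add]

theorem periodic_golay_decimation_general (v : ℕ) [NeZero v] (a b : ZMod v → ℤ)
    (hG : ∀ s : ZMod v, s ≠ 0 →
      ∑ i : ZMod v, (a i * a (i + s) + b i * b (i + s)) = 0)
    (k : ℕ) (hk : Nat.Coprime k v) :
    ∀ s : ZMod v, s ≠ 0 →
      ∑ i : ZMod v,
        (a ((k : ZMod v) * i) * a ((k : ZMod v) * (i + s)) +
         b ((k : ZMod v) * i) * b ((k : ZMod v) * (i + s))) = 0 := by
  intro s hs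
  set u := ZMod.unitOfCoprime k hk
  have hu : (u : ZMod v) = k := ZMod.coe_unitOfCoprime k hk
  have hus : (u : ZMod v) * s ≠ 0 := fun h => hs (u.mul_right_eq_zero.mp h)
  have hdecimate := Fintype.sum_mul_units_shift u (fun i j => a i * a j + b i * b j) s
  rw [hu] at hdecimate hus
  exact hdecimate.trans (hG _ hus)

/-- Applying i ↦ ki (k coprime to v) to both sequences of a periodic
Golay pair yields a periodic Golay pair. -/
theorem periodic_golay_decimation (v : ℕ) [NeZero v] (a b : ZMod v → ℤ)
    (ha : ∀ i, a i = 1 ∨ a i = -1) (hb : ∀ i, b i = 1 ∨ b i = -1)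
    (hG : ∀ s : ZMod v, s ≠ 0 →
      ∑ i : ZMod v, (a i * a (i + s) + b i * b (i + s)) = 0)
    (k : ℕ) (hk : Nat.Coprime k v) :
    ∀ s : ZMod v, s ≠ 0 →
      ∑ i : ZMod v,
        (a ((k : ZMod v) * i) * a ((k : ZMod v) * (i + s)) +
         b ((k : ZMod v) * i) * b ((k : ZMod v) * (i + s))) = 0 :=
  periodic_golay_decimation_general v a b hG k hk
end

section
/- Each charm bracelet equivalence class of k-ary strings of length n contains at most φ(n) necklaces and at most φ(n)/2 bracelets (for n ≥ 3). -/
/-!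
For a unit `d`, the map `t ↦ a + d * t` permutes `ℤ_n`, so the offset `a` is absorbed into the
rotation: the necklace of `j ↦ α (a + d * j)` is the set `affineTranslates α d` of strings
`j ↦ α (d * j + s)`, and its bracelet is `affineTranslates α d ∪ affineTranslates α (-d)`. Hence
the necklaces of the charm bracelet class of `α` are indexed by the units `d`, and its bracelets by
the pairs `{d, -d}`, which have two elements when `n ≥ 3`.
-/

open Function Set

def necklaceClass {G X : Type*} [Add G] (β : G → X) : Set (G → X) :=
  {γ | ∃ t, ∀ j, γ j = β (j + t)}

def braceletClass {G X : Type*} [Add G] [Sub G] (β : G → X) : Set (G → X) :=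
  {γ | ∃ t, (∀ j, γ j = β (j + t)) ∨ (∀ j, γ j = β (t - j))}

section AffineTranslates

variable {R X : Type*} [CommRing R]

def affineTranslates (α : R → X) (c : R) : Set (R → X) :=
  range fun s j => α (c * j + s)

theorem range_translate_comp_affine (α : R → X) (a : R) (d : Rˣ) (c : R) :
    (range fun t j => α (a + d * (c * j + t))) = affineTranslates α (d * c) := by
  have hsurj : Surjective fun t : R => a + d * t :=
    fun s => ⟨↑d⁻¹ * (s - a), by simp [Units.mul_inv_cancel_left]⟩
  rw [affineTranslates, ← hsurj.range_comp fun s j => α (d * c * j + s)]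
  congr 1
  funext t j
  exact congrArg α (by ring)

theorem necklaceClass_comp_affine (α : R → X) (a : R) (d : Rˣ) :
    necklaceClass (fun j => α (a + d * j)) = affineTranslates α d := by
  have h := range_translate_comp_affine α a d 1
  rw [mul_one] at h
  rw [← h]
  ext γ
  simp [necklaceClass, funext_iff, eq_comm]

theorem braceletClass_comp_affine (α : R → X) (a : R) (d : Rˣ) :
    braceletClass (fun j => α (a + d * j)) =
      affineTranslates α d ∪ affineTranslates α (-d) := by
  have h₁ := range_translate_comp_affine α a d 1
  have h₂ := range_translate_comp_affine α a d (-1)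
  rw [mul_one] at h₁
  rw [mul_neg_one] at h₂
  rw [← h₁, ← h₂]
  ext γ
  simp [braceletClass, funext_iff, eq_comm, exists_or, sub_eq_neg_add]

end AffineTranslates

theorem Nat.two_mul_card_range_le_of_fixedPointFree {ι Y : Type*} [Finite ι] (f : ι → Y)
    (σ : ι → ι) (hσ : ∀ i, σ i ≠ i) (hf : ∀ i, f (σ i) = f i) :
    2 * Nat.card (range f) ≤ Nat.card ι := by
  classical
  have := Fintype.ofFinite ι
  rw [Nat.card_eq_fintype_card, ← toFinset_card, toFinset_range, Nat.card_eq_fintype_card]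
  refine Finset.mul_card_image_le_card Finset.univ 2 fun y hy => ?_
  obtain ⟨i, -, rfl⟩ := Finset.mem_image.1 hy
  calc 2 = ({σ i, i} : Finset ι).card := (Finset.card_pair (hσ i)).symm
    _ ≤ _ := Finset.card_le_card (by simp [Finset.insert_subset_iff, hf])

theorem ZMod.units_neg_ne_self {n : ℕ} [Fact (2 < n)] (d : (ZMod n)ˣ) : -d ≠ d := by
  intro h
  apply ZMod.neg_one_ne_one (n := n)
  simpa using congrArg (fun u : (ZMod n)ˣ => ((u * d⁻¹ : (ZMod n)ˣ) : ZMod n)) h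

/-- Each charm bracelet class of k-ary strings of length n (n ≥ 3) contains at most
φ(n) necklace classes and at most φ(n)/2 bracelet classes. -/
theorem charm_class_necklace_bracelet_bounds (n : ℕ) (hn : 3 ≤ n) (k : ℕ)
    (α : ZMod n → Fin k) :
    Nat.card {S : Set (ZMod n → Fin k) //
        ∃ β : ZMod n → Fin k,
          (∃ (a : ZMod n) (d : (ZMod n)ˣ), ∀ j, β j = α (a + (d : ZMod n) * j)) ∧
          S = {γ | ∃ t : ZMod n, ∀ j, γ j = β (j + t)}} ≤ Nat.totient n ∧
    Nat.card {S : Set (ZMod n → Fin k) //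
        ∃ β : ZMod n → Fin k,
          (∃ (a : ZMod n) (d : (ZMod n)ˣ), ∀ j, β j = α (a + (d : ZMod n) * j)) ∧
          S = {γ | ∃ t : ZMod n,
                (∀ j, γ j = β (j + t)) ∨ (∀ j, γ j = β (t - j))}} ≤ Nat.totient n / 2 := by
  have : NeZero n := ⟨by omega⟩
  have : Fact (2 < n) := ⟨hn⟩
  have hunits : Nat.card (ZMod n)ˣ = Nat.totient n := by
    rw [Nat.card_eq_fintype_card, ZMod.card_units_eq_totient]
  constructor
  · rw [← hunits]
    refine (Nat.card_mono (toFinite _) ?_).trans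
      (Finite.card_range_le fun d : (ZMod n)ˣ => affineTranslates α d)
    rintro S ⟨β, ⟨a, d, hβ⟩, rfl⟩
    obtain rfl : β = _ := funext hβ
    exact ⟨d, (necklaceClass_comp_affine α a d).symm⟩
  · let bracelet (d : (ZMod n)ˣ) := affineTranslates α d ∪ affineTranslates α (-d)
    have hpair := Nat.two_mul_card_range_le_of_fixedPointFree bracelet Neg.neg
      ZMod.units_neg_ne_self fun d => by simp only [bracelet, Units.val_neg, neg_neg, union_comm]
    refine (Nat.card_mono (toFinite _) ?_).trans (by omega : Nat.card (range bracelet) ≤ _)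
    rintro S ⟨β, ⟨a, d, hβ⟩, rfl⟩
    obtain rfl : β = _ := funext hβ
    exact ⟨d, (braceletClass_comp_affine α a d).symm⟩
end

section
/- Let (A, B) be a periodic Golay pair of length v = 2d with 2-compressed sequences A', B' of length d (a'_i = a_i + a_{i+d}, b'_i = b_i + b_{i+d}). Then PSD_{A'}(s) + PSD_{B'}(s) = 2v = 4d for every s ∈ ℤ_d. -/
/-!
Since `exp (2πi k s / d) = exp (2πi k (2s) / (2d))` does not change when `k` is shifted by `d`,
the DFT of a compressed sequence at `s` is the DFT of the full sequence at `2s`, i.e. a sum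
`∑ x, a x * ψ x` against an additive character `ψ` of `ℤ_{2d}`. For every such character,
`|∑ x, a x * ψ x|²` is the character sum of the periodic autocorrelation of `a`, and for a
Golay pair the autocorrelations of `a` and `b` add up to `2v` at `0` and cancel elsewhere.
-/

open Finset ComplexConjugate

lemma sum_range_natCast_eq_sum_zmod {M : Type*} [AddCommMonoid M] (n : ℕ) [NeZero n]
    (f : ZMod n → M) : ∑ k ∈ range n, f k = ∑ x, f x :=
  sum_nbij' (fun k => (k : ZMod n)) ZMod.val (fun _ _ => mem_univ _)
    (fun x _ => mem_range.mpr x.val_lt)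
    (fun _ hk => ZMod.val_natCast_of_lt (mem_range.mp hk))
    (fun x _ => ZMod.natCast_zmod_val x) (fun _ _ => rfl)

section PeriodicAutocorrelation

variable {G : Type*} [AddCommGroup G] [Fintype G]

def periodicAutocorrelation (f : G → ℂ) (m : G) : ℂ :=
  ∑ x, conj (f x) * f (x + m)

lemma periodicAutocorrelation_zero (f : G → ℂ) :
    periodicAutocorrelation f 0 = ∑ x, (‖f x‖ ^ 2 : ℂ) := by
  simp only [periodicAutocorrelation, add_zero, Complex.conj_mul']

lemma sq_norm_sum_mul_addChar (ψ : AddChar G ℂ) (f : G → ℂ) :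
    (‖∑ x, f x * ψ x‖ ^ 2 : ℂ) = ∑ m, periodicAutocorrelation f m * ψ m := by
  have hshift : ∀ x, ∑ m, f (x + m) * ψ (x + m) = ∑ y, f y * ψ y := fun x =>
    Equiv.sum_comp (Equiv.addLeft x) fun y => f y * ψ y
  calc (‖∑ x, f x * ψ x‖ ^ 2 : ℂ)
      = ∑ x, conj (f x * ψ x) * ∑ m, f (x + m) * ψ (x + m) := by
        simp only [hshift, ← sum_mul, ← map_sum, Complex.conj_mul']
    _ = ∑ m, periodicAutocorrelation f m * ψ m := by
        simp only [periodicAutocorrelation, mul_sum, sum_mul]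
        rw [sum_comm]
        refine sum_congr rfl fun m _ => sum_congr rfl fun x _ => ?_
        have hψ : ψ m = ψ (-x) * ψ (x + m) := by rw [← ψ.map_add_eq_mul, neg_add_cancel_left]
        rw [map_mul, ← AddChar.map_neg_eq_conj, hψ]
        ring

lemma sq_norm_add_sq_norm_sum_mul_addChar (ψ : AddChar G ℂ) {f g : G → ℂ}
    (h : ∀ m ≠ 0, periodicAutocorrelation f m + periodicAutocorrelation g m = 0) :
    ‖∑ x, f x * ψ x‖ ^ 2 + ‖∑ x, g x * ψ x‖ ^ 2 = ∑ x, (‖f x‖ ^ 2 + ‖g x‖ ^ 2) := by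
  have hC : (‖∑ x, f x * ψ x‖ ^ 2 + ‖∑ x, g x * ψ x‖ ^ 2 : ℂ) =
      periodicAutocorrelation f 0 + periodicAutocorrelation g 0 := by
    rw [sq_norm_sum_mul_addChar, sq_norm_sum_mul_addChar, ← sum_add_distrib,
      sum_eq_single_of_mem 0 (mem_univ _) fun m _ hm => by rw [← add_mul, h m hm, zero_mul],
      ψ.map_zero_eq_one, mul_one, mul_one]
  rw [periodicAutocorrelation_zero, periodicAutocorrelation_zero, ← sum_add_distrib] at hC
  exact_mod_cast hC

end PeriodicAutocorrelation

section Compression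

variable {d : ℕ} [NeZero d]

lemma sum_range_compress_mul_addChar (a : ZMod (2 * d) → ℤ) (ψ : AddChar (ZMod (2 * d)) ℂ)
    (hψ : ψ d = 1) :
    ∑ k ∈ range d, (compress d a k : ℂ) * ψ k = ∑ x, (a x : ℂ) * ψ x := by
  have hperiodic : ∀ k : ℕ, ψ (k + d) = ψ k := fun k => by rw [ψ.map_add_eq_mul, hψ, mul_one]
  rw [← sum_range_natCast_eq_sum_zmod, show range (2 * d) = range (d + d) by rw [two_mul],
    sum_range_add, ← sum_add_distrib]
  refine sum_congr rfl fun k _ => ?_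
  rw [compress, add_comm d k, Nat.cast_add, hperiodic, Int.cast_add, add_mul]

lemma stdAddChar_mulShift_two_mul_natCast (s k : ℕ) :
    (ZMod.stdAddChar.mulShift ((2 * s : ℕ) : ZMod (2 * d))) k =
      Complex.exp (2 * Real.pi * Complex.I * k * s / d) := by
  rw [AddChar.mulShift_apply, ← Nat.cast_mul, ZMod.stdAddChar_apply, ZMod.toCircle_natCast]
  congr 1
  push_cast
  field_simp

lemma stdAddChar_mulShift_two_mul_natCast_self (s : ℕ) :
    (ZMod.stdAddChar.mulShift ((2 * s : ℕ) : ZMod (2 * d))) d = 1 := by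
  rw [AddChar.mulShift_apply, ← Nat.cast_mul, mul_right_comm, Nat.cast_mul, ZMod.natCast_self,
    zero_mul, AddChar.map_zero_eq_one]

end Compression

theorem compressed_psd_sum_general (d : ℕ) (a b : ZMod (2 * d) → ℤ)
    (ha : ∀ i, a i = 1 ∨ a i = -1) (hb : ∀ i, b i = 1 ∨ b i = -1)
    (hG : ∀ k : ZMod (2 * d), k ≠ 0 →
      ∑ i ∈ Finset.range (2 * d), (a i * a (i + k) + b i * b (i + k)) = 0) :
    ∀ s : ℕ, s < d →
      ‖∑ k ∈ Finset.range d,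
          (compress d a k : ℂ) * Complex.exp (2 * Real.pi * Complex.I * k * s / d)‖ ^ 2 +
      ‖∑ k ∈ Finset.range d,
          (compress d b k : ℂ) * Complex.exp (2 * Real.pi * Complex.I * k * s / d)‖ ^ 2 =
      4 * d := by
  intro s _
  rcases d.eq_zero_or_pos with rfl | hd
  · simp
  have : NeZero d := ⟨hd.ne'⟩
  have hGolay : ∀ m ≠ 0, periodicAutocorrelation (fun x => (a x : ℂ)) m +
      periodicAutocorrelation (fun x => (b x : ℂ)) m = 0 := fun m hm => by
    have h := hG m hm
    rw [sum_range_natCast_eq_sum_zmod (2 * d) fun x => a x * a (x + m) + b x * b (x + m)] at h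
    simp only [periodicAutocorrelation, map_intCast, ← sum_add_distrib]
    exact_mod_cast h
  have hunit : ∀ x, ‖(a x : ℂ)‖ ^ 2 + ‖(b x : ℂ)‖ ^ 2 = 2 := fun x => by
    rcases ha x with h | h <;> rcases hb x with h' | h' <;> norm_num [h, h']
  simp_rw [← stdAddChar_mulShift_two_mul_natCast, sum_range_compress_mul_addChar _ _
    (stdAddChar_mulShift_two_mul_natCast_self s)]
  rw [sq_norm_add_sq_norm_sum_mul_addChar _ hGolay, sum_congr rfl fun x _ => hunit x, sum_const,
    card_univ, ZMod.card, nsmul_eq_mul]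
  push_cast
  ring

/-- The PSDs of the 2-compressed sequences of a periodic Golay pair of length v = 2d
sum to 2v = 4d on ℤ_d. -/
theorem compressed_psd_sum (d : ℕ) (hd : 0 < d) (a b : ZMod (2 * d) → ℤ)
    (ha : ∀ i, a i = 1 ∨ a i = -1) (hb : ∀ i, b i = 1 ∨ b i = -1)
    (hG : ∀ k : ZMod (2 * d), k ≠ 0 →
      ∑ i ∈ Finset.range (2 * d), (a i * a (i + k) + b i * b (i + k)) = 0) :
    ∀ s : ℕ, s < d →
      ‖∑ k ∈ Finset.range d,
          (compress d a k : ℂ) * Complex.exp (2 * Real.pi * Complex.I * k * s / d)‖ ^ 2 +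
      ‖∑ k ∈ Finset.range d,
          (compress d b k : ℂ) * Complex.exp (2 * Real.pi * Complex.I * k * s / d)‖ ^ 2 =
      4 * d :=
  compressed_psd_sum_general d a b ha hb hG
end
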